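/- arXiv:math/0406620 — 8 statements merged into one kernel-verified Lean document; each statement's English description precedes it below -/
import Mathlib

section
/- If Q_0(x) = 1 - x^n and Q_{k+1}(x) = Q_k(x) + ((1-x)/(k+1)) Q_k'(x) for k ≥ 0, then for all k ≥ 0, Q_k(x) = 1 - ∑_{j=0}^{k} C(n,j) (1-x)^j x^{n-j}. -/
open Polynomial Finset

lemma key_deriv (n : ℕ) : ∀ k : ℕ,
    (1 - X : Polynomial ℚ) * derivative (∑ j ∈ Finset.range (k + 1),
      Polynomial.C ((n.choose j : ℚ)) * (1 - X) ^ j * X ^ (n - j)) =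
    Polynomial.C ((((k+1) * n.choose (k+1) : ℕ)) : ℚ) * (1 - X) ^ (k+1) * X ^ (n - (k+1)) := by
  intro k
  induction k with
  | zero =>
      simp [derivative_X_pow, Nat.choose_one_right]
      ring
  | succ k ih =>
      rw [Finset.sum_range_succ, derivative_add, mul_add, ih]
      have hchoose : n.choose (k+1) * (n - (k+1)) = (k + 2) * n.choose (k + 2) := by
        rw [← Nat.choose_succ_right_eq]
        ring
      have hderiv : derivative (Polynomial.C ((n.choose (k+1) : ℚ)) * (1 - X) ^ (k+1)
          * X ^ (n - (k+1))) =
          Polynomial.C ((n.choose (k+1) : ℚ)) *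
            ((Polynomial.C ((k+1 : ℕ) : ℚ) * (1 - X) ^ k * (-1)) * X ^ (n - (k+1))
              + (1 - X) ^ (k+1) * (Polynomial.C ((n - (k+1) : ℕ) : ℚ) * X ^ (n - (k+1) - 1))) := by
        rw [mul_assoc, derivative_C_mul, derivative_mul, derivative_pow, derivative_X_pow]
        simp [mul_add]
      rw [hderiv]
      have hsub : n - (k + 1) - 1 = n - (k + 2) := by omega
      rw [hsub]
      have hcast : ((n.choose (k+1) : ℚ)) * ((n - (k+1) : ℕ) : ℚ)
          = (((k+2) * n.choose (k+2) : ℕ) : ℚ) := by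
        rw [← Nat.cast_mul, hchoose]
      have h1 : (1 - X : Polynomial ℚ) * (Polynomial.C ((n.choose (k+1) : ℚ)) *
            ((Polynomial.C ((k+1 : ℕ) : ℚ) * (1 - X) ^ k * (-1)) * X ^ (n - (k+1))
              + (1 - X) ^ (k+1) * (Polynomial.C ((n - (k+1) : ℕ) : ℚ) * X ^ (n - (k+2))))) =
          - (Polynomial.C ((((k+1) * n.choose (k+1) : ℕ)) : ℚ) * (1 - X) ^ (k+1) * X ^ (n - (k+1)))
          + Polynomial.C ((((k+2) * n.choose (k+2) : ℕ)) : ℚ) * (1 - X) ^ (k+2) * X ^ (n - (k+2)) := by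
        rw [← hcast]
        simp only [Nat.cast_mul, Nat.cast_add, Nat.cast_one, map_mul, map_add, map_one]
        ring
      rw [h1]
      ring

theorem stmt_0 (n : ℕ) (Q : ℕ → Polynomial ℚ)
    (hQ0 : Q 0 = 1 - X ^ n)
    (hQrec : ∀ k : ℕ, Q (k + 1) = Q k + Polynomial.C ((k + 1 : ℚ)⁻¹) * (1 - X) * (Q k).derivative) :
    ∀ k : ℕ, Q k = 1 - ∑ j ∈ Finset.range (k + 1),
      Polynomial.C ((n.choose j : ℚ)) * (1 - X) ^ j * X ^ (n - j) := by
  intro k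
  induction k with
  | zero => simp [hQ0]
  | succ k ih =>
      rw [hQrec, ih]
      have hd : derivative ((1 : Polynomial ℚ) - ∑ j ∈ Finset.range (k + 1),
          Polynomial.C ((n.choose j : ℚ)) * (1 - X) ^ j * X ^ (n - j)) =
          - derivative (∑ j ∈ Finset.range (k + 1),
          Polynomial.C ((n.choose j : ℚ)) * (1 - X) ^ j * X ^ (n - j)) := by
        simp
      rw [hd, mul_neg, mul_assoc, key_deriv n k]
      have hcoeff : Polynomial.C ((k + 1 : ℚ)⁻¹) *
            (Polynomial.C ((((k+1) * n.choose (k+1) : ℕ)) : ℚ) * (1 - X) ^ (k+1) * X ^ (n - (k+1)))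
          = Polynomial.C ((n.choose (k+1) : ℚ)) * (1 - X) ^ (k+1) * X ^ (n - (k+1)) := by
        rw [← mul_assoc, ← mul_assoc, ← map_mul]
        congr 2
        push_cast
        rw [← mul_assoc, inv_mul_cancel₀ (by positivity), one_mul]
      rw [hcoeff, Finset.sum_range_succ (fun j => Polynomial.C ((n.choose j : ℚ)) * (1 - X) ^ j * X ^ (n - j)) (k+1)]
      ring
end

section
/- If Q_0(x) = 1 - x^n and Q_{k+1}(x) = Q_k(x) + ((1-x)/(k+1)) Q_k'(x), then for all k with 0 ≤ k ≤ n-1, Q_k(x) = (1-x)^{k+1} ∑_{j=0}^{n-k-1} C(j+k, j) x^j. -/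
open Polynomial Finset

lemma stmt1_deriv (k m : ℕ) :
    derivative (∑ j ∈ Finset.range (m + 1), Polynomial.C (((j + k).choose j : ℚ)) * X ^ j)
      = Polynomial.C ((k + 1 : ℚ)) *
        ∑ j ∈ Finset.range m, Polynomial.C (((j + (k + 1)).choose j : ℚ)) * X ^ j := by
  rw [derivative_sum, Finset.sum_range_succ', Finset.mul_sum]
  simp only [derivative_C_mul, derivative_X_pow, Nat.cast_zero, map_zero, zero_mul, mul_zero,
    pow_zero, derivative_one, add_zero, Nat.add_sub_cancel]
  refine Finset.sum_congr rfl fun j _ => ?_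
  have h := Nat.choose_succ_right_eq (j + k + 1) j
  have h2 : j + k + 1 - j = k + 1 := by omega
  rw [h2] at h
  have hq : (((j + 1 + k).choose (j + 1) : ℕ) : ℚ) * (((j : ℕ) + 1 : ℕ) : ℚ)
      = ((k : ℚ) + 1) * (((j + (k + 1)).choose j : ℕ) : ℚ) := by
    have e1 : j + 1 + k = j + k + 1 := by ring
    have e2 : j + (k + 1) = j + k + 1 := by ring
    rw [e1, e2]
    push_cast
    have hq0 : (((j + k + 1).choose (j + 1) : ℕ) : ℚ) * ((j : ℚ) + 1)
        = (((j + k + 1).choose j : ℕ) : ℚ) * ((k : ℚ) + 1) := by exact_mod_cast h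
    linarith [hq0]
  calc Polynomial.C (((j + 1 + k).choose (j + 1) : ℕ) : ℚ) * (Polynomial.C (((j + 1 : ℕ) : ℚ)) * X ^ j)
      = Polynomial.C ((((j + 1 + k).choose (j + 1) : ℕ) : ℚ) * (((j + 1 : ℕ) : ℚ))) * X ^ j := by
        rw [C_mul]; ring
    _ = Polynomial.C (((k : ℚ) + 1) * (((j + (k + 1)).choose j : ℕ) : ℚ)) * X ^ j := by
        rw [← hq]
    _ = Polynomial.C ((k : ℚ) + 1) * (Polynomial.C ((((j + (k + 1)).choose j : ℕ) : ℚ)) * X ^ j) := by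
        rw [C_mul]; ring

theorem stmt_1 (n : ℕ) (hn : 1 ≤ n) (Q : ℕ → Polynomial ℚ)
    (hQ0 : Q 0 = 1 - X ^ n)
    (hQrec : ∀ k : ℕ, Q (k + 1) = Q k + Polynomial.C ((k + 1 : ℚ)⁻¹) * (1 - X) * (Q k).derivative) :
    ∀ k : ℕ, k ≤ n - 1 →
      Q k = (1 - X) ^ (k + 1) * ∑ j ∈ Finset.range (n - k),
        Polynomial.C (((j + k).choose j : ℚ)) * X ^ j := by
  intro k
  induction k with
  | zero =>
    intro _
    simp only [Nat.add_zero, Nat.choose_self, Nat.cast_one, map_one, one_mul, Nat.sub_zero,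
      zero_add, pow_one, hQ0]
    linear_combination geom_sum_mul (X : ℚ[X]) n
  | succ k ih =>
    intro hk
    have hk' : k ≤ n - 1 := le_of_lt (Nat.lt_of_lt_of_le (Nat.lt_succ_self k) hk)
    have hIH := ih hk'
    have hm : n - k = (n - (k + 1)) + 1 := by omega
    set m := n - (k + 1) with hmdef
    rw [hm] at hIH
    have hder := stmt1_deriv k m
    have hne : (k + 1 : ℚ) ≠ 0 := by positivity
    have hinv : Polynomial.C ((k + 1 : ℚ)⁻¹) * Polynomial.C ((k + 1 : ℚ)) = 1 := by
      rw [← C_mul, inv_mul_cancel₀ hne, map_one]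
    rw [hQrec k, hIH, derivative_mul, derivative_pow, hder]
    simp only [derivative_sub, derivative_one, derivative_X, zero_sub, Nat.add_sub_cancel]
    push_cast
    linear_combination ((1 - X : ℚ[X]) ^ (k + 2) * (∑ j ∈ Finset.range m,
      Polynomial.C (((j + (k + 1)).choose j : ℚ)) * X ^ j)
      - (1 - X : ℚ[X]) ^ (k + 1) * (∑ j ∈ Finset.range (m + 1),
      Polynomial.C (((j + k).choose j : ℚ)) * X ^ j)) * hinv
end

section
/- If Q_0(x) = 1 - x^n and Q_{k+1}(x) = Q_k(x) + ((1-x)/(k+1)) Q_k'(x), then Q_k(x) = 0 (the zero polynomial) for all k ≥ n. -/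
open Polynomial Finset

theorem stmt_2 (n : ℕ) (Q : ℕ → Polynomial ℚ)
    (hQ0 : Q 0 = 1 - X ^ n)
    (hQrec : ∀ k : ℕ, Q (k + 1) = Q k + Polynomial.C ((k + 1 : ℚ)⁻¹) * (1 - X) * (Q k).derivative) :
    ∀ k : ℕ, n ≤ k → Q k = 0 := by
  set S : ℚ[X] := ∑ i ∈ Finset.range n, X ^ i with hS
  have hfact : ∀ k, Q k = C ((k.factorial : ℚ))⁻¹ * ((1 - X) ^ (k + 1) * derivative^[k] S) := by
    intro k
    induction k with
    | zero =>
      simp only [hQ0, Nat.factorial_zero, Nat.cast_one, inv_one, map_one, one_mul, pow_one,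
        Function.iterate_zero, id_eq]
      have := geom_sum_mul (X : ℚ[X]) n
      rw [hS]
      linear_combination this
    | succ k ih =>
      have hk1 : ((k : ℚ) + 1) ≠ 0 := by positivity
      have hfac : ((k + 1).factorial : ℚ)⁻¹ = ((k : ℚ) + 1)⁻¹ * ((k.factorial : ℚ))⁻¹ := by
        rw [Nat.factorial_succ]; push_cast; rw [mul_inv]
      rw [hQrec, ih]
      simp only [hfac, C_mul, derivative_mul, derivative_C, derivative_pow, derivative_sub,
        derivative_one, derivative_X, Function.iterate_succ_apply', zero_mul, zero_add, zero_sub,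
        map_natCast]
      push_cast
      have hC : (Polynomial.C ((k:ℚ)+1)⁻¹) * ((k:ℚ[X]) + 1) = 1 := by
        rw [show ((k:ℚ[X]) + 1) = C ((k:ℚ)+1) by push_cast; simp, ← C_mul,
          inv_mul_cancel₀ hk1, map_one]
      linear_combination -(C ((k.factorial:ℚ))⁻¹ * (1-X)^(k+1) * derivative^[k] S) * hC
  intro k hk
  rw [hfact k]
  have hz : derivative^[k] S = 0 := by
    rcases Nat.eq_zero_or_pos n with hn | hn
    · subst hn; simp [hS]
    · apply Polynomial.iterate_derivative_eq_zero
      calc S.natDegree < n := by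
            apply lt_of_le_of_lt (Polynomial.natDegree_sum_le _ _)
            rw [Finset.fold_max_lt]
            exact ⟨hn, fun i hi => by
              simpa [Polynomial.natDegree_X_pow] using Finset.mem_range.mp hi⟩
        _ ≤ k := hk
  rw [hz, mul_zero, mul_zero]
end

section
/- The two expressions 1 - ∑_{j=0}^{k} C(n,j)(1-x)^j x^{n-j} and (1-x)^{k+1} ∑_{j=0}^{n-k-1} C(j+k,j) x^j are equal as polynomials in x, for any 0 ≤ k ≤ n-1. -/
open Polynomial Finset

lemma lemA (k m : ℕ) :
    (∑ j ∈ Finset.range (m + 1), Polynomial.C (((j + k).choose j : ℚ)) * X ^ j)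
      - Polynomial.C (((m + k + 1).choose (k + 1) : ℚ)) * X ^ m
    = (1 - X) * ∑ j ∈ Finset.range m, Polynomial.C (((j + (k + 1)).choose j : ℚ)) * X ^ j := by
  induction m with
  | zero => simp
  | succ m ih =>
    rw [Finset.sum_range_succ (fun j => Polynomial.C (((j + k).choose j : ℚ)) * X ^ j) (m + 1),
      Finset.sum_range_succ (fun j => Polynomial.C (((j + (k + 1)).choose j : ℚ)) * X ^ j) m]
    have h1 : ((m + 1 + k).choose (m + 1) : ℚ) = (m + k + 1).choose k := by
      have := Nat.choose_symm (show k ≤ m + k + 1 by omega)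
      simp only [show m + k + 1 - k = m + 1 by omega] at this
      rw [show m + 1 + k = m + k + 1 by omega, this]
    have h2 : ((m + 1 + k + 1).choose (k + 1) : ℚ)
        = ((m + k + 1).choose k : ℚ) + ((m + k + 1).choose (k + 1) : ℚ) := by
      rw [show m + 1 + k + 1 = (m + k + 1) + 1 by omega, Nat.choose_succ_succ]
      push_cast; ring
    have h3 : ((m + (k + 1)).choose m : ℚ) = (m + k + 1).choose (k + 1) := by
      have := Nat.choose_symm (show k + 1 ≤ m + k + 1 by omega)
      simp only [show m + k + 1 - (k + 1) = m by omega] at this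
      rw [show m + (k + 1) = m + k + 1 by omega, this]
    rw [h1, h2, h3, map_add]
    linear_combination ih

theorem stmt_3 (n k : ℕ) (hn : 1 ≤ n) (hk : k ≤ n - 1) :
    (1 : Polynomial ℚ) - ∑ j ∈ Finset.range (k + 1),
        Polynomial.C ((n.choose j : ℚ)) * (1 - X) ^ j * X ^ (n - j)
      = (1 - X) ^ (k + 1) * ∑ j ∈ Finset.range (n - k),
        Polynomial.C (((j + k).choose j : ℚ)) * X ^ j := by
  induction k with
  | zero =>
    simp only [Nat.add_zero, Nat.choose_self, Nat.sub_zero, Nat.cast_one, map_one, one_mul,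
      zero_add, pow_one, Finset.sum_range_one, Nat.choose_zero_right, pow_zero, mul_one]
    have := geom_sum_mul (X : Polynomial ℚ) n
    linear_combination this
  | succ k ih =>
    have hk' : k ≤ n - 1 := by omega
    obtain ⟨m, rfl⟩ : ∃ m, n = m + k + 2 := ⟨n - k - 2, by omega⟩
    have ihh := ih hk'
    rw [Finset.sum_range_succ]
    simp only [show m + k + 2 - (k + 1) = m + 1 by omega, show m + k + 2 - k = m + 2 by omega] at *
    have lA := lemA k (m + 1)
    simp only [show m + 1 + k + 1 = m + k + 2 by omega] at lA
    calc (1 : Polynomial ℚ) - (∑ j ∈ Finset.range (k + 1),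
            Polynomial.C (((m + k + 2).choose j : ℚ)) * (1 - X) ^ j * X ^ (m + k + 2 - j)
          + Polynomial.C (((m + k + 2).choose (k + 1) : ℚ)) * (1 - X) ^ (k + 1) * X ^ (m + 1))
        = (1 - X) ^ (k + 1) * ((∑ j ∈ Finset.range (m + 2),
            Polynomial.C (((j + k).choose j : ℚ)) * X ^ j)
            - Polynomial.C (((m + k + 2).choose (k + 1) : ℚ)) * X ^ (m + 1)) := by
          linear_combination ihh
      _ = (1 - X) ^ (k + 1 + 1) * ∑ j ∈ Finset.range (m + 1),
            Polynomial.C (((j + (k + 1)).choose j : ℚ)) * X ^ j := by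
          rw [lA]; ring
end

section
/- The function Q(x,t) = (1 - (1 - (1-t)(1-x))^n)/(1-t), as a formal power series in t with polynomial coefficients in x, has coefficient of t^k equal to Q_k(x), where Q_0(x) = 1 - x^n and Q_{k+1}(x) = Q_k(x) + ((1-x)/(k+1)) Q_k'(x). -/
/-!
Since `1 - (1 - t)(1 - x) = x + t(1 - x)`, the binomial theorem gives the `t^j`-coefficient
`b_j = (n choose j) x^(n-j) (1-x)^j` of its `n`-th power, so the claim is `Q_k = 1 - ∑_{j ≤ k} b_j`.
This closed form satisfies the recurrence because `(1 - x) b_j' = (j + 1) b_(j+1) - j b_j`,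
which telescopes to `(1 - x) (∑_{j < k} b_j)' = k b_k`.
-/

section BinomTerm

open Polynomial Finset

variable (R : Type*) [CommRing R]

noncomputable def binomTerm (n j : ℕ) : R[X] :=
  (n.choose j : R[X]) * X ^ (n - j) * (1 - X) ^ j

variable {R}

theorem binomTerm_eq_zero_of_lt {n j : ℕ} (h : n < j) : binomTerm R n j = 0 := by
  simp [binomTerm, Nat.choose_eq_zero_of_lt h]

theorem one_sub_X_mul_derivative_binomTerm (n m : ℕ) :
    (1 - X) * derivative (binomTerm R n m)
      = ((m : R[X]) + 1) * binomTerm R n (m + 1) - (m : R[X]) * binomTerm R n m := by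
  have hchoose : ((n.choose (m + 1) : ℕ) : R[X]) * ((m : R[X]) + 1)
      = (n.choose m : R[X]) * ((n - m : ℕ) : R[X]) := by
    simpa using congrArg (Nat.cast : ℕ → R[X]) (Nat.choose_succ_right_eq n m)
  simp only [binomTerm, derivative_mul, derivative_natCast, derivative_pow, derivative_sub,
    derivative_one, derivative_X, C_eq_natCast]
  cases m with
  | zero =>
    simp only [Nat.cast_zero, zero_add, mul_one, Nat.choose_zero_right, Nat.sub_zero] at hchoose ⊢
    linear_combination (X ^ (n - 1) * (1 - X)) * hchoose.symm
  | succ m =>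
    rw [show n - (m + 1 + 1) = n - (m + 1) - 1 by omega]
    push_cast at hchoose ⊢
    linear_combination (X ^ (n - (m + 1) - 1) * (1 - X) ^ (m + 2)) * hchoose.symm

theorem one_sub_X_mul_derivative_sum_binomTerm (n k : ℕ) :
    (1 - X) * derivative (∑ j ∈ range k, binomTerm R n j) = (k : R[X]) * binomTerm R n k := by
  induction k with
  | zero => simp
  | succ k ih =>
    rw [sum_range_succ, derivative_add, mul_add, ih, one_sub_X_mul_derivative_binomTerm]
    push_cast
    ring

theorem eq_one_sub_sum_binomTerm {K : Type*} [Field K] [CharZero K] (n : ℕ) (Q : ℕ → K[X])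
    (hQ0 : Q 0 = 1 - X ^ n)
    (hQrec : ∀ k : ℕ, Q (k + 1) = Q k + C ((k + 1 : K)⁻¹) * (1 - X) * (Q k).derivative)
    (k : ℕ) : Q k = 1 - ∑ j ∈ range (k + 1), binomTerm K n j := by
  induction k with
  | zero => simp [hQ0, binomTerm]
  | succ k ih =>
    have hk : (k + 1 : K) ≠ 0 := Nat.cast_add_one_ne_zero k
    have htel := one_sub_X_mul_derivative_sum_binomTerm (R := K) n (k + 1)
    rw [hQrec, ih, sum_range_succ _ (k + 1), derivative_sub, derivative_one, zero_sub,
      mul_neg, mul_assoc, htel, ← mul_assoc, Nat.cast_succ, ← C_eq_natCast, ← C_1, ← C_add,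
      ← C_mul, inv_mul_cancel₀ hk, C_1, one_mul]
    ring

end BinomTerm

namespace PowerSeries

open Finset

theorem one_sub_X_mul_mk_sum_range {R : Type*} [Ring R] (a : ℕ → R) :
    (1 - X) * mk (fun k => ∑ j ∈ range (k + 1), a j) = mk a := by
  ext (_ | k)
  · simp
  · simp [sub_mul, coeff_succ_X_mul, sum_range_succ _ (k + 1)]

theorem mk_binomTerm (R : Type*) [CommRing R] (n : ℕ) :
    mk (binomTerm R n) = (C Polynomial.X + X * C (1 - Polynomial.X)) ^ n := by
  have hterm (j : ℕ) : (X * C (1 - Polynomial.X)) ^ j * C Polynomial.X ^ (n - j)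
      * (n.choose j : (Polynomial R)⟦X⟧) = C (binomTerm R n j) * X ^ j := by
    simp only [binomTerm, map_mul, map_pow, map_natCast]
    ring
  ext k : 1
  simp only [add_comm (C _), add_pow, hterm, map_sum, coeff_C_mul_X_pow, sum_ite_eq, mem_range,
    coeff_mk]
  split_ifs with hk
  · rfl
  · exact binomTerm_eq_zero_of_lt (by omega)

end PowerSeries

open PowerSeries

theorem stmt_6 (n : ℕ) (Q : ℕ → Polynomial ℚ)
    (hQ0 : Q 0 = 1 - Polynomial.X ^ n)
    (hQrec : ∀ k : ℕ, Q (k + 1) = Q k +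
      Polynomial.C ((k + 1 : ℚ)⁻¹) * (1 - Polynomial.X) * (Q k).derivative) :
    (1 - PowerSeries.X) * PowerSeries.mk Q
      = 1 - (1 - (1 - PowerSeries.X) *
          (1 - PowerSeries.C (R := Polynomial ℚ) Polynomial.X)) ^ n := by
  have hQ : Q = 1 - fun k => ∑ j ∈ Finset.range (k + 1), binomTerm ℚ n j :=
    funext (eq_one_sub_sum_binomTerm n Q hQ0 hQrec)
  calc (1 - X) * mk Q
      = (1 - X) * mk 1 - (1 - X) * mk fun k => ∑ j ∈ Finset.range (k + 1), binomTerm ℚ n j := by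
        rw [hQ, ← mul_sub]
        rfl
    _ = 1 - mk (binomTerm ℚ n) := by
        rw [mul_comm, mk_one_mul_one_sub_eq_one, one_sub_X_mul_mk_sum_range]
    _ = _ := by
        rw [mk_binomTerm, map_sub, map_one]
        ring
end

section
/- For r ≥ 1 and 0 ≤ k ≤ n-1, the sum ∑_{j=0}^{n-k-1} (-1)^j C(k+1, r-j) C(k+j, j) equals (-1)^{n-k+1} ((n-k)/r) C(n,k) C(k, r-n+k). -/
/-! The sum telescopes in `m = n - k`: `(-1)^(m+1) (m/r) C(k+m, m) C(k, r-m)` is an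
antidifference of its summand (Gosper). -/

open Finset

/-- Binomial coefficient `C(a, b)` with an integer lower index, zero when `b < 0`. -/
def ichoose (a : ℕ) (b : ℤ) : ℕ := if 0 ≤ b then a.choose b.toNat else 0

@[simp]
lemma ichoose_natCast (a t : ℕ) : ichoose a t = a.choose t := by
  simp [ichoose]

lemma ichoose_of_neg (a : ℕ) {s : ℤ} (hs : s < 0) : ichoose a s = 0 :=
  if_neg (by omega)

lemma ichoose_succ_left (k : ℕ) (s : ℤ) :
    ichoose (k + 1) s = ichoose k s + ichoose k (s - 1) := by
  rcases lt_trichotomy s 0 with hs | rfl | hs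
  · simp [ichoose_of_neg, hs, show s - 1 < 0 by omega]
  · simp [ichoose]
  · obtain ⟨t, rfl⟩ : ∃ t : ℕ, s = t + 1 := ⟨(s - 1).toNat, by omega⟩
    rw [add_sub_cancel_right, ← Nat.cast_succ, ichoose_natCast, ichoose_natCast, ichoose_natCast,
      Nat.choose_succ_succ', add_comm]

lemma mul_ichoose {R : Type*} [CommRing R] (k : ℕ) (s : ℤ) :
    (s : R) * ichoose k s = ((k : R) - s + 1) * ichoose k (s - 1) := by
  rcases lt_trichotomy s 0 with hs | rfl | hs
  · simp [ichoose_of_neg, hs, show s - 1 < 0 by omega]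
  · simp [ichoose]
  · obtain ⟨t, rfl⟩ : ∃ t : ℕ, s = t + 1 := ⟨(s - 1).toNat, by omega⟩
    rw [add_sub_cancel_right, ← Nat.cast_succ, ichoose_natCast, ichoose_natCast]
    rcases le_or_gt t k with htk | htk
    · have := congrArg (Nat.cast : ℕ → R) (Nat.choose_succ_right_eq k t)
      push_cast [htk] at this ⊢
      linear_combination this
    · simp [Nat.choose_eq_zero_of_lt, htk, show k < t + 1 by omega]

theorem sum_range_neg_one_pow_mul_ichoose_mul_choose (k r : ℕ) (hr : r ≠ 0) (m : ℕ) :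
    ∑ j ∈ range m, (-1 : ℚ) ^ j * ichoose (k + 1) ((r : ℤ) - j) * (k + j).choose j
      = (-1 : ℚ) ^ (m + 1) * m / r * (k + m).choose m * ichoose k ((r : ℤ) - m) := by
  induction m with
  | zero => simp
  | succ m ih =>
    rw [sum_range_succ, ih]
    have pascal := congrArg (Nat.cast : ℕ → ℚ) (ichoose_succ_left k ((r : ℤ) - m))
    have absorb := mul_ichoose (R := ℚ) k ((r : ℤ) - m)
    have choose_succ := congrArg (Nat.cast : ℕ → ℚ) (Nat.add_one_mul_choose_eq (k + m) m)
    push_cast at pascal absorb choose_succ ⊢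
    rw [show (r : ℤ) - (m + 1) = (r : ℤ) - m - 1 by ring]
    field_simp
    linear_combination (-1 : ℚ) ^ m * (k + m).choose m * (r * pascal + absorb)
      + (-1 : ℚ) ^ m * ichoose k ((r : ℤ) - m - 1) * choose_succ

theorem stmt_7_general (n k r : ℕ) (hr : 1 ≤ r) :
    ∑ j ∈ Finset.range (n - k),
        ((-1 : ℚ)) ^ j * (ichoose (k + 1) ((r : ℤ) - j) : ℚ) * ((k + j).choose j : ℚ)
      = (-1 : ℚ) ^ (n - k + 1) * ((n - k : ℕ) : ℚ) / (r : ℚ) * (n.choose k : ℚ) *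
          (ichoose k ((r : ℤ) - n + k) : ℚ) := by
  rcases le_or_gt k n with hkn | hnk
  · obtain ⟨m, rfl⟩ := Nat.exists_eq_add_of_le hkn
    rw [add_tsub_cancel_left, sum_range_neg_one_pow_mul_ichoose_mul_choose k r (by omega),
      Nat.choose_symm_add, show (r : ℤ) - (k + m : ℕ) + k = r - m by push_cast; ring]
  · simp [Nat.sub_eq_zero_of_le hnk.le]

theorem stmt_7 (n k r : ℕ) (hn : 1 ≤ n) (hk : k ≤ n - 1) (hr : 1 ≤ r) :
    ∑ j ∈ Finset.range (n - k),
        ((-1 : ℚ)) ^ j * (ichoose (k + 1) ((r : ℤ) - j) : ℚ) * ((k + j).choose j : ℚ)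
      = (-1 : ℚ) ^ (n - k + 1) * ((n - k : ℕ) : ℚ) / (r : ℚ) * (n.choose k : ℚ) *
          (ichoose k ((r : ℤ) - n + k) : ℚ) :=
  stmt_7_general n k r hr
end

section
/- Suppose α' = 0 and T(n,k) satisfies T(0,k) = δ_{k,0}, T(n+1,k) = (αn + βk + γ) T(n,k) + (β'k + γ') T(n,k-1). Then T(n,k) = (∑_{i1+i2+i3 = n-k} s(n, n-i1) · C(n-i1, k+i2) · S(k+i2, k) · α^{i1} β^{i2} γ^{i3}) · ∏_{j=1}^{k} (γ' + j β'), where s and S denote unsigned Stirling numbers of the first and second kind respectively. -/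
open Finset

/-- Unsigned Stirling numbers of the first kind (number of permutations by cycle count). -/
def stir1 : ℕ → ℕ → ℕ
  | 0, 0 => 1
  | 0, _ + 1 => 0
  | n + 1, 0 => n * stir1 n 0
  | n + 1, k + 1 => n * stir1 n (k + 1) + stir1 n k

/-- Stirling numbers of the second kind (number of set partitions by block count). -/
def stir2 : ℕ → ℕ → ℕ
  | 0, 0 => 1
  | 0, _ + 1 => 0
  | _ + 1, 0 => 0
  | n + 1, k + 1 => (k + 1) * stir2 n (k + 1) + stir2 n k

lemma stir2_eq_zero : ∀ {p k : ℕ}, p < k → stir2 p k = 0 := by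
  intro p
  induction p with
  | zero => intro k h; match k, h with | k+1, _ => rfl
  | succ p ih =>
    intro k h
    match k, h with
    | k+1, h =>
      show (k + 1) * stir2 p (k + 1) + stir2 p k = 0
      rw [ih (by omega), ih (by omega)]; simp

lemma stir1_eq_zero : ∀ {n m : ℕ}, n < m → stir1 n m = 0 := by
  intro n
  induction n with
  | zero => intro m h; match m, h with | m+1, _ => rfl
  | succ n ih =>
    intro m h
    match m, h with
    | m+1, h =>
      show n * stir1 n (m + 1) + stir1 n m = 0
      rw [ih (by omega), ih (by omega)]; simp

section
variable {R : Type*} [CommRing R]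

def ff (α β γ : R) (n k : ℕ) : R :=
  ∑ m ∈ Finset.range (n + 1), ∑ p ∈ Finset.range (n + 1),
    (stir1 n m : R) * (m.choose p : R) * (stir2 p k : R) * α ^ (n - m) * β ^ (p - k) * γ ^ (m - p)

lemma stir1_succ_cast (n m : ℕ) :
    (stir1 (n + 1) m : R) = n * stir1 n m + (if m = 0 then 0 else (stir1 n (m - 1) : R)) := by
  cases m with
  | zero => show ((n * stir1 n 0 : ℕ) : R) = _; push_cast; simp
  | succ m => show ((n * stir1 n (m+1) + stir1 n m : ℕ) : R) = _; push_cast; simp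

lemma choose_succ_cast (m p : ℕ) :
    ((m + 1).choose p : R) = (m.choose p : R) + (if p = 0 then 0 else (m.choose (p - 1) : R)) := by
  cases p with
  | zero => simp
  | succ p => rw [Nat.choose_succ_succ]; push_cast; simp; ring

lemma stir2_succ_cast (p k : ℕ) :
    (stir2 (p + 1) k : R) = k * stir2 p k + (if k = 0 then 0 else (stir2 p (k - 1) : R)) := by
  cases k with
  | zero => show ((0:ℕ):R) = _; simp
  | succ k => show (((k+1) * stir2 p (k+1) + stir2 p k : ℕ) : R) = _; push_cast; simp

lemma ff_rec (α β γ : R) (n k : ℕ) :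
    ff α β γ (n + 1) k = (α * n + β * k + γ) * ff α β γ n k
      + (if k = 0 then 0 else ff α β γ n (k - 1)) := by
  have hsub : Finset.range (n + 1) ⊆ Finset.range (n + 2) := by
    intro x hx; simp only [Finset.mem_range] at *; omega
  have e1 : ff α β γ (n + 1) k =
      (∑ m ∈ Finset.range (n + 2), ∑ p ∈ Finset.range (n + 2),
        (n : R) * ((stir1 n m : R) * (m.choose p : R) * (stir2 p k : R) *
          α ^ (n + 1 - m) * β ^ (p - k) * γ ^ (m - p)))
    + (∑ m ∈ Finset.range (n + 2), ∑ p ∈ Finset.range (n + 2),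
        (if m = 0 then 0 else (stir1 n (m - 1) : R)) * (m.choose p : R) * (stir2 p k : R) *
          α ^ (n + 1 - m) * β ^ (p - k) * γ ^ (m - p)) := by
    rw [ff, ← Finset.sum_add_distrib]
    refine Finset.sum_congr rfl fun m _ => ?_
    rw [← Finset.sum_add_distrib]
    refine Finset.sum_congr rfl fun p _ => ?_
    rw [stir1_succ_cast]; ring
  have hS1 : (∑ m ∈ Finset.range (n + 2), ∑ p ∈ Finset.range (n + 2),
        (n : R) * ((stir1 n m : R) * (m.choose p : R) * (stir2 p k : R) *
          α ^ (n + 1 - m) * β ^ (p - k) * γ ^ (m - p)))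
      = α * (n : R) * ff α β γ n k := by
    rw [ff, Finset.mul_sum]
    rw [← Finset.sum_subset hsub (by
      intro m hm hm'
      have hm2 : m = n + 1 := by simp only [Finset.mem_range] at hm hm'; omega
      subst hm2
      rw [stir1_eq_zero (by omega)]
      simp)]
    refine Finset.sum_congr rfl fun m hm => ?_
    rw [Finset.mul_sum]
    rw [← Finset.sum_subset hsub (by
      intro p hp hp'
      have hp2 : p = n + 1 := by simp only [Finset.mem_range] at hp hp'; omega
      have hm2 : m ≤ n := by simp only [Finset.mem_range] at hm; omega
      subst hp2
      rw [Nat.choose_eq_zero_of_lt (by omega)]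
      simp)]
    refine Finset.sum_congr rfl fun p _ => ?_
    have hm2 : m ≤ n := by simp only [Finset.mem_range] at hm; omega
    have h3 : n + 1 - m = (n - m) + 1 := by omega
    rw [h3, pow_succ]
    ring
  have hS2 : (∑ m ∈ Finset.range (n + 2), ∑ p ∈ Finset.range (n + 2),
        (if m = 0 then 0 else (stir1 n (m - 1) : R)) * (m.choose p : R) * (stir2 p k : R) *
          α ^ (n + 1 - m) * β ^ (p - k) * γ ^ (m - p))
      = (β * k + γ) * ff α β γ n k + (if k = 0 then 0 else ff α β γ n (k - 1)) := by
    rw [Finset.sum_range_succ']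
    have h0 : (∑ p ∈ Finset.range (n + 2),
        (if (0:ℕ) = 0 then (0:R) else (stir1 n (0 - 1) : R)) * ((0:ℕ).choose p : R) *
          (stir2 p k : R) * α ^ (n + 1 - 0) * β ^ (p - k) * γ ^ (0 - p)) = 0 := by
      simp
    rw [h0, add_zero]
    have e2 : ∀ m ∈ Finset.range (n + 1),
        (∑ p ∈ Finset.range (n + 2),
          (if m + 1 = 0 then (0:R) else (stir1 n (m + 1 - 1) : R)) * ((m+1).choose p : R) *
            (stir2 p k : R) * α ^ (n + 1 - (m+1)) * β ^ (p - k) * γ ^ (m + 1 - p))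
        = (∑ p ∈ Finset.range (n + 2),
            (stir1 n m : R) * (m.choose p : R) * (stir2 p k : R) *
              α ^ (n - m) * β ^ (p - k) * γ ^ (m + 1 - p))
        + (∑ p ∈ Finset.range (n + 2),
            (stir1 n m : R) * (if p = 0 then 0 else (m.choose (p-1) : R)) * (stir2 p k : R) *
              α ^ (n - m) * β ^ (p - k) * γ ^ (m + 1 - p)) := by
      intro m _
      rw [← Finset.sum_add_distrib]
      refine Finset.sum_congr rfl fun p _ => ?_
      simp only [Nat.add_sub_cancel, if_neg (Nat.succ_ne_zero m)]
      rw [choose_succ_cast, show n + 1 - (m + 1) = n - m from by omega]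
      ring
    rw [Finset.sum_congr rfl e2, Finset.sum_add_distrib]
    -- first part equals γ * ff n k
    have hA : (∑ m ∈ Finset.range (n + 1), ∑ p ∈ Finset.range (n + 2),
        (stir1 n m : R) * (m.choose p : R) * (stir2 p k : R) *
          α ^ (n - m) * β ^ (p - k) * γ ^ (m + 1 - p)) = γ * ff α β γ n k := by
      rw [ff, Finset.mul_sum]
      refine Finset.sum_congr rfl fun m hm => ?_
      rw [Finset.mul_sum]
      rw [← Finset.sum_subset hsub (by
        intro p hp hp'
        have hp2 : p = n + 1 := by simp only [Finset.mem_range] at hp hp'; omega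
        have hm2 : m ≤ n := by simp only [Finset.mem_range] at hm; omega
        subst hp2
        rw [Nat.choose_eq_zero_of_lt (by omega)]
        simp)]
      refine Finset.sum_congr rfl fun p _ => ?_
      by_cases hpm : p ≤ m
      · have h3 : m + 1 - p = (m - p) + 1 := by omega
        rw [h3, pow_succ]; ring
      · rw [Nat.choose_eq_zero_of_lt (by omega)]; simp
    -- second part
    have hB : (∑ m ∈ Finset.range (n + 1), ∑ p ∈ Finset.range (n + 2),
        (stir1 n m : R) * (if p = 0 then 0 else (m.choose (p-1) : R)) * (stir2 p k : R) *
          α ^ (n - m) * β ^ (p - k) * γ ^ (m + 1 - p))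
        = β * k * ff α β γ n k + (if k = 0 then 0 else ff α β γ n (k - 1)) := by
      have e3 : ∀ m ∈ Finset.range (n + 1),
          (∑ p ∈ Finset.range (n + 2),
            (stir1 n m : R) * (if p = 0 then 0 else (m.choose (p-1) : R)) * (stir2 p k : R) *
              α ^ (n - m) * β ^ (p - k) * γ ^ (m + 1 - p))
          = (∑ p ∈ Finset.range (n + 1),
              (stir1 n m : R) * (m.choose p : R) * ((k : R) * (stir2 p k : R)) *
                α ^ (n - m) * β ^ (p + 1 - k) * γ ^ (m - p))
          + (∑ p ∈ Finset.range (n + 1),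
              (stir1 n m : R) * (m.choose p : R) *
                (if k = 0 then 0 else (stir2 p (k-1) : R)) *
                α ^ (n - m) * β ^ (p + 1 - k) * γ ^ (m - p)) := by
        intro m _
        rw [Finset.sum_range_succ']
        simp only [↓reduceIte, Nat.add_sub_cancel, Nat.succ_ne_zero, if_false,
          mul_zero, zero_mul, add_zero]
        rw [← Finset.sum_add_distrib]
        refine Finset.sum_congr rfl fun p _ => ?_
        rw [stir2_succ_cast, show m + 1 - (p + 1) = m - p from by omega]
        ring
      rw [Finset.sum_congr rfl e3, Finset.sum_add_distrib]
      have hB1 : (∑ m ∈ Finset.range (n + 1), ∑ p ∈ Finset.range (n + 1),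
          (stir1 n m : R) * (m.choose p : R) * ((k : R) * (stir2 p k : R)) *
            α ^ (n - m) * β ^ (p + 1 - k) * γ ^ (m - p)) = β * k * ff α β γ n k := by
        rw [ff, Finset.mul_sum]
        refine Finset.sum_congr rfl fun m _ => ?_
        rw [Finset.mul_sum]
        refine Finset.sum_congr rfl fun p _ => ?_
        by_cases hpk : k ≤ p
        · have h5 : p + 1 - k = (p - k) + 1 := by omega
          rw [h5, pow_succ]; ring
        · rw [stir2_eq_zero (by omega)]; simp
      have hB2 : (∑ m ∈ Finset.range (n + 1), ∑ p ∈ Finset.range (n + 1),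
          (stir1 n m : R) * (m.choose p : R) *
            (if k = 0 then 0 else (stir2 p (k-1) : R)) *
            α ^ (n - m) * β ^ (p + 1 - k) * γ ^ (m - p))
          = (if k = 0 then 0 else ff α β γ n (k - 1)) := by
        by_cases hk : k = 0
        · subst hk; simp
        · rw [if_neg hk, ff]
          refine Finset.sum_congr rfl fun m _ => ?_
          refine Finset.sum_congr rfl fun p _ => ?_
          rw [if_neg hk]
          have h6 : p + 1 - k = p - (k - 1) := by omega
          rw [h6]
      rw [hB1, hB2]
    rw [hA, hB]
    ring
  rw [e1, hS1, hS2]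
  ring

lemma ff_zero (α β γ : R) (k : ℕ) : ff α β γ 0 k = if k = 0 then 1 else 0 := by
  cases k with
  | zero => simp [ff, stir1, stir2]
  | succ k =>
    rw [ff]
    simp [stir2_eq_zero (Nat.succ_pos k)]

lemma ff_eq (α β γ : R) (n k : ℕ) :
    ff α β γ n k =
      ∑ i₁ ∈ Finset.range (n - k + 1), ∑ i₂ ∈ Finset.range (n - k - i₁ + 1),
        (stir1 n (n - i₁) : R) * ((n - i₁).choose (k + i₂) : R) * (stir2 (k + i₂) k : R) *
          α ^ i₁ * β ^ i₂ * γ ^ (n - k - i₁ - i₂) := by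
  have hR : (∑ i₁ ∈ Finset.range (n - k + 1), ∑ i₂ ∈ Finset.range (n - k - i₁ + 1),
        (stir1 n (n - i₁) : R) * ((n - i₁).choose (k + i₂) : R) * (stir2 (k + i₂) k : R) *
          α ^ i₁ * β ^ i₂ * γ ^ (n - k - i₁ - i₂))
      = ∑ i₁ ∈ Finset.range (n + 1), ∑ i₂ ∈ Finset.range (n + 1),
        (stir1 n (n - i₁) : R) * ((n - i₁).choose (k + i₂) : R) * (stir2 (k + i₂) k : R) *
          α ^ i₁ * β ^ i₂ * γ ^ (n - k - i₁ - i₂) := by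
    have hinner : ∀ i₁ ∈ Finset.range (n - k + 1),
        (∑ i₂ ∈ Finset.range (n - k - i₁ + 1),
          (stir1 n (n - i₁) : R) * ((n - i₁).choose (k + i₂) : R) * (stir2 (k + i₂) k : R) *
            α ^ i₁ * β ^ i₂ * γ ^ (n - k - i₁ - i₂))
        = ∑ i₂ ∈ Finset.range (n + 1),
          (stir1 n (n - i₁) : R) * ((n - i₁).choose (k + i₂) : R) * (stir2 (k + i₂) k : R) *
            α ^ i₁ * β ^ i₂ * γ ^ (n - k - i₁ - i₂) := by
      intro i₁ hi₁
      simp only [Finset.mem_range] at hi₁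
      refine Finset.sum_subset ?_ ?_
      · intro x hx; simp only [Finset.mem_range] at *; omega
      · intro i₂ hi₂ hni₂
        simp only [Finset.mem_range] at hi₂ hni₂
        rw [Nat.choose_eq_zero_of_lt (by omega)]
        simp
    rw [Finset.sum_congr rfl hinner]
    refine Finset.sum_subset ?_ ?_
    · intro x hx; simp only [Finset.mem_range] at *; omega
    · intro i₁ hi₁ hni₁
      simp only [Finset.mem_range] at hi₁ hni₁
      refine Finset.sum_eq_zero fun i₂ _ => ?_
      rw [Nat.choose_eq_zero_of_lt (by omega)]
      simp
  rw [hR, ff]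
  rw [← Finset.sum_range_reflect (fun m => ∑ p ∈ Finset.range (n + 1),
    (stir1 n m : R) * (m.choose p : R) * (stir2 p k : R) *
      α ^ (n - m) * β ^ (p - k) * γ ^ (m - p)) (n + 1)]
  simp only [Nat.add_sub_cancel]
  refine Finset.sum_congr rfl fun i₁ hi₁ => ?_
  have hi : i₁ ≤ n := by simp only [Finset.mem_range] at hi₁; omega
  rw [Finset.sum_subset (show Finset.range (n+1) ⊆ Finset.range (k+n+1) by
      intro x hx; simp only [Finset.mem_range] at *; omega)
    (by
      intro p hp hnp
      simp only [Finset.mem_range] at hp hnp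
      rw [Nat.choose_eq_zero_of_lt (by omega)]
      simp)]
  conv_lhs => rw [Finset.range_eq_Ico]
  rw [← Finset.sum_Ico_consecutive _ (Nat.zero_le k) (by omega : k ≤ k + n + 1)]
  have hz : (∑ p ∈ Finset.Ico 0 k,
      (stir1 n (n - i₁) : R) * ((n - i₁).choose p : R) * (stir2 p k : R) *
        α ^ (n - (n - i₁)) * β ^ (p - k) * γ ^ (n - i₁ - p)) = 0 := by
    refine Finset.sum_eq_zero fun p hp => ?_
    have : p < k := (Finset.mem_Ico.mp hp).2
    rw [stir2_eq_zero this]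
    simp
  rw [hz, zero_add, Finset.sum_Ico_eq_sum_range]
  simp only [show k + n + 1 - k = n + 1 from by omega]
  refine Finset.sum_congr rfl fun i₂ _ => ?_
  rw [show n - (n - i₁) = i₁ from by omega, show k + i₂ - k = i₂ from by omega,
    show n - i₁ - (k + i₂) = n - k - i₁ - i₂ from by omega]

end

theorem stmt_12 {R : Type*} [CommRing R] (α β γ β' γ' : R) (T : ℕ → ℤ → R)
    (hneg : ∀ (n : ℕ) (k : ℤ), k < 0 → T n k = 0)
    (h0 : ∀ k : ℤ, T 0 k = if k = 0 then 1 else 0)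
    (hrec : ∀ (n : ℕ) (k : ℤ), 0 ≤ k →
      T (n + 1) k = (α * n + β * k + γ) * T n k + (β' * k + γ') * T n (k - 1)) :
    ∀ (n k : ℕ), T n k =
      (∑ i₁ ∈ Finset.range (n - k + 1), ∑ i₂ ∈ Finset.range (n - k - i₁ + 1),
          (stir1 n (n - i₁) : R) * ((n - i₁).choose (k + i₂) : R) * (stir2 (k + i₂) k : R) *
            α ^ i₁ * β ^ i₂ * γ ^ (n - k - i₁ - i₂)) *
        ∏ j ∈ Finset.range k, (γ' + (j + 1 : ℕ) * β') := by
  have key : ∀ (n : ℕ) (k : ℕ), T n k =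
      ff α β γ n k * ∏ j ∈ Finset.range k, (γ' + (j + 1 : ℕ) * β') := by
    intro n
    induction n with
    | zero =>
      intro k
      rw [h0, ff_zero]
      cases k with
      | zero => simp
      | succ k =>
        rw [if_neg (by exact_mod_cast Nat.succ_ne_zero k), if_neg (Nat.succ_ne_zero k)]
        ring
    | succ n ih =>
      intro k
      rw [hrec n k (Int.natCast_nonneg k)]
      cases k with
      | zero =>
        rw [show ((0:ℕ):ℤ) - 1 = (-1:ℤ) from by norm_num, hneg n (-1) (by norm_num),
          ih 0, ff_rec]
        simp only [if_pos rfl, add_zero, Nat.cast_zero, Int.cast_zero]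
        push_cast
        ring
      | succ k =>
        rw [show (((k+1:ℕ)):ℤ) - 1 = ((k:ℕ):ℤ) from by push_cast; ring,
          ih (k+1), ih k, ff_rec, if_neg (Nat.succ_ne_zero k), Nat.add_sub_cancel,
          Finset.prod_range_succ]
        push_cast
        ring
  intro n k
  rw [key n k, ff_eq]
end

section
/- With all six parameters nonnegative real numbers (and α' = 0), the GKP entry T(n,k) factors as P(α,β,γ) · ∏_{j=1}^{k}(γ' + jβ') for some polynomial P depending only on α, β, γ, n, k; in particular, as a polynomial in the five indeterminates α, β, γ, β', γ', T(n,k) is the product of a polynomial in α, β, γ alone and a polynomial in β', γ' alone. -/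
open MvPolynomial Finset

theorem stmt_13
    (T : ℕ → ℤ → MvPolynomial (Fin 5) ℚ)
    (hneg : ∀ (n : ℕ) (k : ℤ), k < 0 → T n k = 0)
    (h0 : ∀ k : ℤ, T 0 k = if k = 0 then 1 else 0)
    (hrec : ∀ (n : ℕ) (k : ℤ), 0 ≤ k →
      T (n + 1) k = (X 0 * (n : MvPolynomial (Fin 5) ℚ) + X 1 * ((k : ℤ) : MvPolynomial (Fin 5) ℚ) + X 2) * T n k +
        (X 3 * ((k : ℤ) : MvPolynomial (Fin 5) ℚ) + X 4) * T n (k - 1)) :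
    ∀ (n k : ℕ), ∃ P ∈ MvPolynomial.supported ℚ ({0, 1, 2} : Set (Fin 5)),
      T n k = P * ∏ j ∈ Finset.range k, (X 4 + (((j : ℕ) + 1 : ℕ) : MvPolynomial (Fin 5) ℚ) * X 3) := by
  have hX0 : (X 0 : MvPolynomial (Fin 5) ℚ) ∈ MvPolynomial.supported ℚ ({0, 1, 2} : Set (Fin 5)) := by
    rw [MvPolynomial.X_mem_supported]; simp
  have hX1 : (X 1 : MvPolynomial (Fin 5) ℚ) ∈ MvPolynomial.supported ℚ ({0, 1, 2} : Set (Fin 5)) := by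
    rw [MvPolynomial.X_mem_supported]; simp
  have hX2 : (X 2 : MvPolynomial (Fin 5) ℚ) ∈ MvPolynomial.supported ℚ ({0, 1, 2} : Set (Fin 5)) := by
    rw [MvPolynomial.X_mem_supported]; simp
  have hA : ∀ (n : ℕ) (k : ℤ),
      (X 0 * (n : MvPolynomial (Fin 5) ℚ) + X 1 * ((k : ℤ) : MvPolynomial (Fin 5) ℚ) + X 2)
        ∈ MvPolynomial.supported ℚ ({0, 1, 2} : Set (Fin 5)) := by
    intro n k
    exact add_mem (add_mem (mul_mem hX0 (natCast_mem _ n)) (mul_mem hX1 (intCast_mem _ k))) hX2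
  intro n
  induction n with
  | zero =>
    intro k
    cases k with
    | zero =>
      refine ⟨1, one_mem _, ?_⟩
      simp [h0]
    | succ k =>
      refine ⟨0, zero_mem _, ?_⟩
      rw [h0]
      simp only [Finset.prod_const, zero_mul, ite_eq_right_iff]
      intro h; omega
  | succ n ih =>
    intro k
    cases k with
    | zero =>
      obtain ⟨P, hP, hT⟩ := ih 0
      refine ⟨(X 0 * (n : MvPolynomial (Fin 5) ℚ) + X 1 * ((0 : ℤ) : MvPolynomial (Fin 5) ℚ) + X 2) * P,
        mul_mem (hA n 0) hP, ?_⟩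
      rw [Nat.cast_zero] at hT ⊢
      rw [hrec n 0 le_rfl, hneg n (0 - 1) (by norm_num), hT]
      simp
    | succ k =>
      obtain ⟨P, hP, hT⟩ := ih (k + 1)
      obtain ⟨P', hP', hT'⟩ := ih k
      refine ⟨(X 0 * (n : MvPolynomial (Fin 5) ℚ) + X 1 * (((k : ℕ) + 1 : ℤ) : MvPolynomial (Fin 5) ℚ) + X 2) * P + P',
        add_mem (mul_mem (hA n _) hP) hP', ?_⟩
      have hk : ((↑(k + 1) : ℤ)) = ((k : ℤ) + 1) := by push_cast; ring
      rw [hrec n (↑(k + 1)) (by positivity)]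
      have h1 : T n (↑(k + 1) : ℤ) = P * ∏ j ∈ Finset.range (k + 1),
          (X 4 + (((j : ℕ) + 1 : ℕ) : MvPolynomial (Fin 5) ℚ) * X 3) := hT
      have h2 : T n ((↑(k + 1) : ℤ) - 1) = P' * ∏ j ∈ Finset.range k,
          (X 4 + (((j : ℕ) + 1 : ℕ) : MvPolynomial (Fin 5) ℚ) * X 3) := by
        rw [show ((↑(k + 1) : ℤ) - 1) = (k : ℤ) by push_cast; ring]
        exact hT'
      rw [h1, h2, Finset.prod_range_succ]
      push_cast
      ring
end
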